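/- Let $A_{Q+1}, \dots, A_N$ and $B$ be symmetric matrices with spectral norms $\|I - \lambda A_t\| \leq 1-\lambda\mu$ and $\|I - \lambda B\| \leq 1-\lambda\mu$ for all $t$, where $0 < \lambda\mu < 1$, and suppose $\|A_t - B\| \leq \rho \, \delta_t$ for constants $\delta_t \geq 0$. Then $\left\| \prod_{t=N}^{Q+1} (I - \lambda A_t) - (I - \lambda B)^{N-Q} \right\| \leq \lambda\rho (1-\lambda\mu)^{N-Q-1} \sum_{\tau=Q+1}^{N} \delta_\tau$. -/

import Mathlib

open scoped Matrix.Norms.L2Operator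

lemma norm_one_le_aux {d : ℕ} : ‖(1 : Matrix (Fin d) (Fin d) ℝ)‖ ≤ 1 := by
  rw [Matrix.cstar_norm_def, map_one, ContinuousLinearMap.one_def]
  exact ContinuousLinearMap.norm_id_le

lemma prod_norm_le_aux {d : ℕ} (r : ℝ) (hr : 0 ≤ r) (C : ℕ → Matrix (Fin d) (Fin d) ℝ) :
    ∀ n, (∀ j < n, ‖C j‖ ≤ r) →
      ‖((List.range n).map C).prod‖ ≤ r ^ n := by
  intro n
  induction n with
  | zero => simpa using norm_one_le_aux
  | succ n ih =>
    intro h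
    rw [List.range_succ, List.map_append, List.prod_append]
    simp only [List.map_cons, List.map_nil, List.prod_cons, List.prod_nil, mul_one]
    calc ‖((List.range n).map C).prod * C n‖
        ≤ ‖((List.range n).map C).prod‖ * ‖C n‖ := norm_mul_le _ _
      _ ≤ r ^ n * r := by
          apply mul_le_mul (ih fun j hj => h j (by omega)) (h n (by omega))
            (norm_nonneg _) (pow_nonneg hr _)
      _ = r ^ (n + 1) := by ring

lemma key_aux {d : ℕ} (r : ℝ) (hr : 0 ≤ r) (C : ℕ → Matrix (Fin d) (Fin d) ℝ)
    (D : Matrix (Fin d) (Fin d) ℝ) (hD : ‖D‖ ≤ r) :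
    ∀ n, (∀ j < n, ‖C j‖ ≤ r) →
      ‖((List.range n).map C).prod - D ^ n‖
        ≤ r ^ (n - 1) * ∑ j ∈ Finset.range n, ‖C j - D‖ := by
  intro n
  induction n with
  | zero => simp
  | succ n ih =>
    intro h
    have hP := prod_norm_le_aux r hr C n (fun j hj => h j (by omega))
    have hI := ih (fun j hj => h j (by omega))
    rw [List.range_succ, List.map_append, List.prod_append]
    simp only [List.map_cons, List.map_nil, List.prod_cons, List.prod_nil, mul_one]
    have hdecomp : ((List.range n).map C).prod * C n - D ^ (n + 1)
        = ((List.range n).map C).prod * (C n - D)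
          + (((List.range n).map C).prod - D ^ n) * D := by
      rw [pow_succ]
      noncomm_ring
    rw [hdecomp, Finset.sum_range_succ]
    have hS : 0 ≤ ∑ j ∈ Finset.range n, ‖C j - D‖ :=
      Finset.sum_nonneg fun j _ => norm_nonneg _
    have hstep : (r ^ (n - 1) * ∑ j ∈ Finset.range n, ‖C j - D‖) * r
        ≤ r ^ n * ∑ j ∈ Finset.range n, ‖C j - D‖ := by
      rcases Nat.eq_zero_or_pos n with hn | hn
      · subst hn; simp
      · have hrr : r ^ (n - 1) * r = r ^ n := by
          rw [← pow_succ]; congr 1; omega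
        exact le_of_eq (by rw [← hrr]; ring)
    calc ‖((List.range n).map C).prod * (C n - D)
          + (((List.range n).map C).prod - D ^ n) * D‖
        ≤ ‖((List.range n).map C).prod * (C n - D)‖
          + ‖(((List.range n).map C).prod - D ^ n) * D‖ := norm_add_le _ _
      _ ≤ ‖((List.range n).map C).prod‖ * ‖C n - D‖
          + ‖((List.range n).map C).prod - D ^ n‖ * ‖D‖ :=
          add_le_add (norm_mul_le _ _) (norm_mul_le _ _)
      _ ≤ r ^ n * ‖C n - D‖ + (r ^ (n - 1) * ∑ j ∈ Finset.range n, ‖C j - D‖) * r :=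
          add_le_add (mul_le_mul_of_nonneg_right hP (norm_nonneg _))
            (mul_le_mul hI hD (norm_nonneg _) (by positivity))
      _ ≤ r ^ n * ‖C n - D‖ + r ^ n * ∑ j ∈ Finset.range n, ‖C j - D‖ :=
          add_le_add_right hstep _
      _ = r ^ (n + 1 - 1) * (∑ j ∈ Finset.range n, ‖C j - D‖ + ‖C n - D‖) := by
          simp; ring

theorem stmt4 {d : ℕ} (N Q : ℕ) (hQN : Q ≤ N) (A : ℕ → Matrix (Fin d) (Fin d) ℝ)
    (B : Matrix (Fin d) (Fin d) ℝ) (lam mu rho : ℝ) (δ : ℕ → ℝ)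
    (hlam : 0 < lam) (hmu : 0 < mu) (hlm : lam * mu < 1)
    (hAsym : ∀ t ∈ Finset.Icc (Q + 1) N, (A t).IsHermitian)
    (hBsym : B.IsHermitian)
    (hA : ∀ t ∈ Finset.Icc (Q + 1) N,
      ‖(1 : Matrix (Fin d) (Fin d) ℝ) - lam • A t‖ ≤ 1 - lam * mu)
    (hB : ‖(1 : Matrix (Fin d) (Fin d) ℝ) - lam • B‖ ≤ 1 - lam * mu)
    (hδ : ∀ t, 0 ≤ δ t)
    (hAB : ∀ t ∈ Finset.Icc (Q + 1) N, ‖A t - B‖ ≤ rho * δ t) :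
    ‖((List.range (N - Q)).map
        (fun j => (1 : Matrix (Fin d) (Fin d) ℝ) - lam • A (N - j))).prod
      - ((1 : Matrix (Fin d) (Fin d) ℝ) - lam • B) ^ (N - Q)‖
      ≤ lam * rho * (1 - lam * mu) ^ (N - Q - 1) * ∑ τ ∈ Finset.Icc (Q + 1) N, δ τ := by
  set r : ℝ := 1 - lam * mu with hr_def
  have hr : 0 ≤ r := by simp [hr_def]; linarith
  set C : ℕ → Matrix (Fin d) (Fin d) ℝ :=
    fun j => (1 : Matrix (Fin d) (Fin d) ℝ) - lam • A (N - j) with hC_def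
  have hmem : ∀ j < N - Q, N - j ∈ Finset.Icc (Q + 1) N := by
    intro j hj
    simp only [Finset.mem_Icc]
    omega
  have hC : ∀ j < N - Q, ‖C j‖ ≤ r := fun j hj => hA _ (hmem j hj)
  have key := key_aux r hr C ((1 : Matrix (Fin d) (Fin d) ℝ) - lam • B) hB (N - Q) hC
  refine key.trans ?_
  have hterm : ∀ j ∈ Finset.range (N - Q),
      ‖C j - ((1 : Matrix (Fin d) (Fin d) ℝ) - lam • B)‖ ≤ lam * (rho * δ (N - j)) := by
    intro j hj
    rw [Finset.mem_range] at hj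
    have : C j - ((1 : Matrix (Fin d) (Fin d) ℝ) - lam • B) = lam • (B - A (N - j)) := by
      simp only [hC_def, smul_sub]
      abel_nf
    rw [this, norm_smul, Real.norm_eq_abs, abs_of_pos hlam, norm_sub_rev]
    exact mul_le_mul_of_nonneg_left (hAB _ (hmem j hj)) hlam.le
  have hsum : ∑ j ∈ Finset.range (N - Q), ‖C j - ((1 : Matrix (Fin d) (Fin d) ℝ) - lam • B)‖
      ≤ ∑ j ∈ Finset.range (N - Q), lam * (rho * δ (N - j)) :=
    Finset.sum_le_sum hterm
  have hreindex : ∑ j ∈ Finset.range (N - Q), δ (N - j) = ∑ τ ∈ Finset.Icc (Q + 1) N, δ τ := by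
    apply Finset.sum_nbij' (fun j => N - j) (fun τ => N - τ)
    · intro j hj; rw [Finset.mem_range] at hj; simp only [Finset.mem_Icc]; omega
    · intro τ hτ; rw [Finset.mem_Icc] at hτ; rw [Finset.mem_range]; omega
    · intro j hj; rw [Finset.mem_range] at hj; omega
    · intro τ hτ; rw [Finset.mem_Icc] at hτ; omega
    · intro j hj; rfl
  calc r ^ (N - Q - 1) * ∑ j ∈ Finset.range (N - Q),
        ‖C j - ((1 : Matrix (Fin d) (Fin d) ℝ) - lam • B)‖
      ≤ r ^ (N - Q - 1) * ∑ j ∈ Finset.range (N - Q), lam * (rho * δ (N - j)) := by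
        exact mul_le_mul_of_nonneg_left hsum (pow_nonneg hr _)
    _ = lam * rho * r ^ (N - Q - 1) * ∑ j ∈ Finset.range (N - Q), δ (N - j) := by
        simp only [← Finset.mul_sum]; ring
    _ = lam * rho * r ^ (N - Q - 1) * ∑ τ ∈ Finset.Icc (Q + 1) N, δ τ := by rw [hreindex]
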